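/- Let $D:(R_0,\infty)\to(0,\infty)$ be nondecreasing and absolutely continuous, and let $h(R)=\int_{\partial^+C_R}(\varphi\sigma)^2\,ds$ be a nonnegative locally integrable function such that $D(R)^2 \le D'(R)\,h(R)$ for a.e. $R>R_0$ and $\int_{r_1}^{r_2}h(R)\,dR \le C r_2^2\log r_2$ for all $R_0<r_1<r_2$. Then for all $R_0 < r_1 < r_2$, $\frac{(r_2-r_1)^2}{C r_2^2 \log r_2} \le \frac{1}{D(r_1)} - \frac{1}{D(r_2)}$, and consequently taking $r_1 = 2^j r_*$, $r_2=2^{j+1}r_*$ and summing over $j$ yields a contradiction with $D(r_*)>0$ for $r_* > R_0$; hence no such positive $D$ exists. -/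

import Mathlib

open MeasureTheory Real Set Filter

lemma stmt9_deriv_nonneg {R0 : ℝ} {D : ℝ → ℝ}
    (hDmono : MonotoneOn D (Ioi R0))
    (hDdiff : ∀ R > R0, DifferentiableAt ℝ D R)
    {x : ℝ} (hx : R0 < x) : 0 ≤ deriv D x := by
  have hd : HasDerivAt D (deriv D x) x := (hDdiff x hx).hasDerivAt
  rw [hasDerivAt_iff_tendsto_slope] at hd
  have hd' : Tendsto (slope D x) (nhdsWithin x (Ioi x)) (nhds (deriv D x)) :=
    hd.mono_left (nhdsWithin_mono x fun y hy => ne_of_gt hy)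
  refine ge_of_tendsto hd' ?_
  filter_upwards [self_mem_nhdsWithin] with y hy
  have hy' : x < y := hy
  have hDle : D x ≤ D y := hDmono (mem_Ioi.2 hx) (mem_Ioi.2 (hx.trans hy')) hy'.le
  rw [slope_def_field]
  exact div_nonneg (by linarith) (by linarith)

lemma stmt9_key (R0 : ℝ) (hR0 : 2 ≤ R0) (D h : ℝ → ℝ)
    (hDpos : ∀ R > R0, 0 < D R)
    (hDmono : MonotoneOn D (Ioi R0))
    (hDdiff : ∀ R > R0, DifferentiableAt ℝ D R)
    (hode : ∀ᵐ R : ℝ, R > R0 → D R ^ 2 ≤ deriv D R * h R)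
    (hh : ∀ R, 0 ≤ h R)
    (hhint : ∀ r1 r2 : ℝ, R0 < r1 → r1 < r2 → IntegrableOn h (Icc r1 r2))
    (r1 r2 : ℝ) (h1 : R0 < r1) (h12 : r1 < r2) :
    (r2 - r1) ^ 2 / (4 * (∫ R in Icc r1 r2, h R) + 2) ≤ 1 / D r1 - 1 / D r2 := by
  have hr2 : R0 < r2 := h1.trans h12
  have hD1 : 0 < D r1 := hDpos r1 h1
  have hD2 : 0 < D r2 := hDpos r2 hr2
  have hD12 : D r1 ≤ D r2 := hDmono h1 hr2 h12.le
  set Δ : ℝ := r2 - r1 with hΔdef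
  have hΔ : 0 < Δ := sub_pos.2 h12
  set I : ℝ := ∫ R in Icc r1 r2, h R with hIdef
  have hI : 0 ≤ I := setIntegral_nonneg measurableSet_Icc fun x _ => hh x
  have h2I : (0:ℝ) < 2 * I + 1 := by linarith
  set M : ℝ := (2 * I + 1) / Δ with hMdef
  have hM : 0 < M := div_pos h2I hΔ
  -- measurable representative
  have hint : IntegrableOn h (Icc r1 r2) := hhint r1 r2 h1 h12
  have hsm := hint.aestronglyMeasurable
  set h' : ℝ → ℝ := hsm.mk h with hh'def
  have heq : h =ᵐ[volume.restrict (Icc r1 r2)] h' := hsm.ae_eq_mk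
  have h'meas : StronglyMeasurable h' := hsm.stronglyMeasurable_mk
  -- bad set and Chebyshev
  set B : Set ℝ := {x | ENNReal.ofReal M ≤ ENNReal.ofReal (h' x)} with hBdef
  have hBmeas : MeasurableSet B :=
    measurableSet_le measurable_const (ENNReal.measurable_ofReal.comp h'meas.measurable)
  have hM0 : ENNReal.ofReal M ≠ 0 := (ENNReal.ofReal_pos.2 hM).ne'
  have hcheb : ENNReal.ofReal M * (volume.restrict (Icc r1 r2)) B ≤ ENNReal.ofReal I := by
    have h1' : ENNReal.ofReal I = ∫⁻ x in Icc r1 r2, ENNReal.ofReal (h' x) := by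
      rw [hIdef, MeasureTheory.ofReal_integral_eq_lintegral_ofReal hint
        (Filter.Eventually.of_forall fun x => hh x)]
      exact lintegral_congr_ae (heq.mono fun x hx => by simp only [hx])
    rw [h1']
    exact mul_meas_ge_le_lintegral₀
      ((ENNReal.measurable_ofReal.comp h'meas.measurable).aemeasurable) _
  have hBb : volume (B ∩ Icc r1 r2) ≤ ENNReal.ofReal (Δ / 2) := by
    rw [Measure.restrict_apply hBmeas] at hcheb
    have hb1 : volume (B ∩ Icc r1 r2) ≤ ENNReal.ofReal I / ENNReal.ofReal M :=
      (ENNReal.le_div_iff_mul_le (Or.inl hM0) (Or.inl ENNReal.ofReal_ne_top)).2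
        (by rwa [mul_comm])
    rw [← ENNReal.ofReal_div_of_pos hM] at hb1
    refine hb1.trans (ENNReal.ofReal_le_ofReal ?_)
    rw [hMdef, div_div_eq_mul_div, div_le_div_iff₀ h2I two_pos]
    nlinarith [hI, hΔ.le]
  -- good set
  set G : Set ℝ := Ioo r1 r2 \ B with hGdef
  have hGmeas : MeasurableSet G := measurableSet_Ioo.diff hBmeas
  have hGsub : G ⊆ Icc r1 r2 := fun x hx => Ioo_subset_Icc_self hx.1
  have hGvol : ENNReal.ofReal (Δ / 2) ≤ volume G := by
    have h2' : Ioo r1 r2 \ (B ∩ Icc r1 r2) ⊆ G := fun x hx =>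
      ⟨hx.1, fun hB => hx.2 ⟨hB, Ioo_subset_Icc_self hx.1⟩⟩
    calc ENNReal.ofReal (Δ / 2) = ENNReal.ofReal Δ - ENNReal.ofReal (Δ / 2) := by
          rw [← ENNReal.ofReal_sub Δ (by positivity : (0:ℝ) ≤ Δ / 2)]
          congr 1; ring
      _ ≤ volume (Ioo r1 r2) - volume (B ∩ Icc r1 r2) := by
          rw [Real.volume_Ioo]
          exact tsub_le_tsub le_rfl hBb
      _ ≤ volume (Ioo r1 r2 \ (B ∩ Icc r1 r2)) := le_measure_diff
      _ ≤ volume G := measure_mono h2'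
  -- Stieltjes function
  set c : ℝ → ℝ := fun x => min (max x r1) r2 with hcdef
  have hc_mem : ∀ x, c x ∈ Icc r1 r2 := fun x =>
    ⟨le_min (le_max_right x r1) h12.le, min_le_right _ _⟩
  have hc_gt : ∀ x, R0 < c x := fun x => h1.trans_le (hc_mem x).1
  have hcD : ∀ x, 0 < D (c x) := fun x => hDpos _ (hc_gt x)
  have hc_mono : Monotone c := (monotone_id.max monotone_const).min monotone_const
  set F : ℝ → ℝ := fun x => -(1 / D (c x)) with hFdef
  have hF_mono : Monotone F := by
    intro a b hab
    have hDab : D (c a) ≤ D (c b) := hDmono (hc_gt a) (hc_gt b) (hc_mono hab)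
    have := one_div_le_one_div_of_le (hcD a) hDab
    simp only [hFdef]
    linarith
  have hF_cont : Continuous F := by
    have hc_cont : Continuous c := (continuous_id.max continuous_const).min continuous_const
    have hDc : Continuous fun x => D (c x) := by
      rw [continuous_iff_continuousAt]
      intro x
      exact ((hDdiff _ (hc_gt x)).continuousAt).comp hc_cont.continuousAt
    exact (continuous_const.div hDc fun x => (hcD x).ne').neg
  set f : StieltjesFunction ℝ := ⟨F, hF_mono, fun x => hF_cont.continuousWithinAt⟩ with hfdef
  have hfapp : ∀ x, f x = F x := fun x => rfl
  have hc1 : c r1 = r1 := by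
    simp only [hcdef, max_self, min_eq_left h12.le]
  have hc2 : c r2 = r2 := by
    simp only [hcdef, max_eq_left h12.le, min_self]
  have hfIoc : f.measure (Ioc r1 r2) = ENNReal.ofReal (1 / D r1 - 1 / D r2) := by
    rw [f.measure_Ioc]
    congr 1
    rw [hfapp, hfapp]
    simp only [hFdef, hc1, hc2]
    ring
  -- a.e. lower bound for the RN derivative on G
  have key_ae : ∀ᵐ x ∂(volume.restrict G),
      ENNReal.ofReal (1 / M) ≤ f.measure.rnDeriv volume x := by
    have e1 : ∀ᵐ x ∂(volume.restrict G),
        HasDerivAt f ((f.measure.rnDeriv volume x).toReal) x :=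
      ae_restrict_of_ae f.ae_hasDerivAt
    have e2 : ∀ᵐ x ∂(volume.restrict G), f.measure.rnDeriv volume x < ⊤ :=
      ae_restrict_of_ae (Measure.rnDeriv_lt_top _ _)
    have e3 : ∀ᵐ x ∂(volume.restrict G), x > R0 → D x ^ 2 ≤ deriv D x * h x :=
      ae_restrict_of_ae hode
    have e4 : ∀ᵐ x ∂(volume.restrict G), h x = h' x :=
      ae_restrict_of_ae_restrict_of_subset hGsub heq
    have e5 : ∀ᵐ x ∂(volume.restrict G), x ∈ G := ae_restrict_mem hGmeas
    filter_upwards [e1, e2, e3, e4, e5] with x hx1 hx2 hx3 hx4 hx5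
    obtain ⟨hxIoo, hxB⟩ := hx5
    have hxR0 : R0 < x := h1.trans hxIoo.1
    have hDx : 0 < D x := hDpos x hxR0
    have hhxM : h x ≤ M := by
      rw [hx4]
      by_contra hcon
      exact hxB (ENNReal.ofReal_le_ofReal (not_le.1 hcon).le)
    have hode' : D x ^ 2 ≤ deriv D x * h x := hx3 hxR0
    have hderiv_nonneg : 0 ≤ deriv D x := stmt9_deriv_nonneg hDmono hDdiff hxR0
    have hode2 : D x ^ 2 ≤ deriv D x * M :=
      hode'.trans (mul_le_mul_of_nonneg_left hhxM hderiv_nonneg)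
    have hF_eq : F =ᶠ[nhds x] fun y => -(1 / D y) := by
      filter_upwards [Ioo_mem_nhds hxIoo.1 hxIoo.2] with y hy
      have hcy : c y = y := by
        simp only [hcdef, max_eq_left hy.1.le, min_eq_left hy.2.le]
      simp only [hFdef, hcy]
    have hd1 : HasDerivAt (fun y => -(1 / D y))
        ((f.measure.rnDeriv volume x).toReal) x :=
      hx1.congr_of_eventuallyEq hF_eq.symm
    have hd2 : HasDerivAt (fun y => -(1 / D y)) (deriv D x / D x ^ 2) x := by
      have hD' : HasDerivAt D (deriv D x) x := (hDdiff x hxR0).hasDerivAt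
      have := ((hasDerivAt_const x (1:ℝ)).div hD' hDx.ne').neg
      exact this.congr_deriv (by ring)
    have hid : (f.measure.rnDeriv volume x).toReal = deriv D x / D x ^ 2 :=
      hd1.unique hd2
    have hMle : 1 / M ≤ deriv D x / D x ^ 2 := by
      rw [div_le_div_iff₀ hM (by positivity)]
      linarith
    calc ENNReal.ofReal (1 / M)
        ≤ ENNReal.ofReal ((f.measure.rnDeriv volume x).toReal) := by
          rw [hid]; exact ENNReal.ofReal_le_ofReal hMle
      _ = f.measure.rnDeriv volume x := ENNReal.ofReal_toReal hx2.ne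
  -- main chain
  have main : ENNReal.ofReal (1 / M * (Δ / 2)) ≤ ENNReal.ofReal (1 / D r1 - 1 / D r2) := by
    calc ENNReal.ofReal (1 / M * (Δ / 2))
        = ENNReal.ofReal (1 / M) * ENNReal.ofReal (Δ / 2) :=
          ENNReal.ofReal_mul (by positivity)
      _ ≤ ENNReal.ofReal (1 / M) * volume G := mul_le_mul_right hGvol _
      _ = ∫⁻ _ in G, ENNReal.ofReal (1 / M) := (setLIntegral_const _ _).symm
      _ ≤ ∫⁻ x in G, f.measure.rnDeriv volume x := lintegral_mono_ae key_ae
      _ ≤ f.measure G := Measure.setLIntegral_rnDeriv_le G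
      _ ≤ f.measure (Ioc r1 r2) := measure_mono fun x hx => Ioo_subset_Ioc_self hx.1
      _ = ENNReal.ofReal (1 / D r1 - 1 / D r2) := hfIoc
  have hnn : 0 ≤ 1 / D r1 - 1 / D r2 := by
    have := one_div_le_one_div_of_le hD1 hD12
    linarith
  have hfinal : 1 / M * (Δ / 2) ≤ 1 / D r1 - 1 / D r2 :=
    (ENNReal.ofReal_le_ofReal_iff hnn).1 main
  have harith : (r2 - r1) ^ 2 / (4 * I + 2) = 1 / M * (Δ / 2) := by
    rw [hMdef, hΔdef]
    field_simp
    ring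
  rw [harith]
  exact hfinal

/-- ODE/dyadic core of the Liouville argument: a positive nondecreasing `D` with
`D² ≤ D' h` and `∫ h ≲ r² log r` on dyadic intervals cannot exist; in particular
the dyadic difference inequality holds and one reaches a contradiction. -/
theorem stmt9 (R0 C : ℝ) (hR0 : 2 ≤ R0) (hC : 0 < C)
    (D h : ℝ → ℝ)
    (hDpos : ∀ R > R0, 0 < D R)
    (hDmono : MonotoneOn D (Ioi R0))
    (hDdiff : ∀ R > R0, DifferentiableAt ℝ D R)
    (hode : ∀ᵐ R : ℝ, R > R0 → D R ^ 2 ≤ deriv D R * h R)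
    (hh : ∀ R, 0 ≤ h R)
    (hhint : ∀ r1 r2 : ℝ, R0 < r1 → r1 < r2 → IntegrableOn h (Icc r1 r2))
    (hbound : ∀ r1 r2 : ℝ, R0 < r1 → r1 < r2 →
      (∫ R in r1..r2, h R) ≤ C * r2 ^ 2 * Real.log r2) :
    (∀ r1 r2 : ℝ, R0 < r1 → r1 < r2 →
      (r2 - r1) ^ 2 / (C * r2 ^ 2 * Real.log r2) ≤ 1 / D r1 - 1 / D r2) ∧ False := by
  have key := stmt9_key R0 hR0 D h hDpos hDmono hDdiff hode hh hhint
  have hfalse : False := by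
    set r : ℝ := R0 + 1 with hrdef
    have hr0 : R0 < r := by linarith
    have hr3 : (3:ℝ) ≤ r := by linarith
    set a : ℕ → ℝ := fun j => 2 ^ j * r with hadef
    have h2j : ∀ j : ℕ, (1:ℝ) ≤ 2 ^ j := fun j => one_le_pow₀ one_le_two
    have ha_pos : ∀ j, 0 < a j := fun j => by
      have := h2j j; simp only [hadef]; nlinarith
    have haj3 : ∀ j, (3:ℝ) ≤ a j := fun j => by
      have := h2j j; simp only [hadef]; nlinarith
    have ha_gt : ∀ j, R0 < a j := fun j => by
      have := h2j j; simp only [hadef]; nlinarith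
    have ha1 : ∀ j, a (j+1) = 2 * a j := fun j => by
      simp only [hadef, pow_succ]; ring
    have ha_lt : ∀ j, a j < a (j+1) := fun j => by
      rw [ha1 j]; nlinarith [ha_pos j]
    have hlog2r : 0 < Real.log (2 * r) := Real.log_pos (by linarith)
    have hC' : (0:ℝ) < 16 * C + 1 := by linarith
    set K : ℝ := (16 * C + 1) * Real.log (2 * r) with hKdef
    have hK : 0 < K := mul_pos hC' hlog2r
    have hstep : ∀ j : ℕ,
        1 / K * (1 / ((j:ℝ) + 1)) ≤ 1 / D (a j) - 1 / D (a (j+1)) := by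
      intro j
      have hkey := key (a j) (a (j+1)) (ha_gt j) (ha_lt j)
      set L : ℝ := Real.log (a (j+1)) with hLdef
      have hIj_le : (∫ R in Icc (a j) (a (j+1)), h R) ≤ C * (a (j+1)) ^ 2 * L := by
        rw [integral_Icc_eq_integral_Ioc, ← intervalIntegral.integral_of_le (ha_lt j).le]
        exact hbound _ _ (ha_gt j) (ha_lt j)
      have hL1 : 1 ≤ L := by
        rw [hLdef, Real.le_log_iff_exp_le (ha_pos (j+1))]
        have hexp := Real.exp_one_lt_d9
        have := haj3 j
        rw [ha1 j]
        nlinarith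
      have hIj_nonneg : 0 ≤ ∫ R in Icc (a j) (a (j+1)), h R :=
        setIntegral_nonneg measurableSet_Icc fun x _ => hh x
      have hLle : L ≤ ((j:ℝ) + 1) * Real.log (2 * r) := by
        rw [hLdef, hadef]
        rw [Real.log_mul (by positivity) (by positivity), Real.log_pow,
          Real.log_mul (by norm_num) (by positivity)]
        have hlogr : 0 ≤ Real.log r := Real.log_nonneg (by linarith)
        have hlog2 : 0 ≤ Real.log 2 := Real.log_nonneg one_le_two
        push_cast
        nlinarith
      have hL0 : 0 < L := lt_of_lt_of_le one_pos hL1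
      calc 1 / K * (1 / ((j:ℝ) + 1))
          = 1 / ((16 * C + 1) * (((j:ℝ) + 1) * Real.log (2 * r))) := by
            rw [hKdef, div_mul_div_comm, one_mul]
            congr 1
            ring
        _ ≤ 1 / ((16 * C + 1) * L) := by
            apply one_div_le_one_div_of_le (mul_pos hC' hL0)
            have hj1 : (0:ℝ) < (j:ℝ) + 1 := by positivity
            exact mul_le_mul_of_nonneg_left hLle hC'.le
        _ ≤ (a j) ^ 2 / (4 * (C * (a (j+1)) ^ 2 * L) + 2) := by
            rw [ha1 j, div_le_div_iff₀ (mul_pos hC' hL0) (by nlinarith [mul_nonneg (mul_nonneg hC.le (sq_nonneg (2 * a j))) hL0.le])]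
            have h9 : (9:ℝ) ≤ (a j) ^ 2 := by nlinarith [haj3 j]
            nlinarith [mul_le_mul_of_nonneg_right h9 hL0.le, hC.le]
        _ ≤ (a j) ^ 2 / (4 * (∫ R in Icc (a j) (a (j+1)), h R) + 2) := by
            apply div_le_div_of_nonneg_left (by positivity) (by linarith) (by linarith)
        _ = (a (j+1) - a j) ^ 2 / (4 * (∫ R in Icc (a j) (a (j+1)), h R) + 2) := by
            rw [show a (j+1) - a j = a j by rw [ha1 j]; ring]
        _ ≤ 1 / D (a j) - 1 / D (a (j+1)) := hkey
    have hsum : ∀ N : ℕ, (1 / K) * ∑ j ∈ Finset.range N, (1 / ((j:ℝ) + 1)) ≤ 1 / D r := by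
      intro N
      rw [Finset.mul_sum]
      calc (∑ j ∈ Finset.range N, 1 / K * (1 / ((j:ℝ) + 1)))
          ≤ ∑ j ∈ Finset.range N, (1 / D (a j) - 1 / D (a (j+1))) :=
            Finset.sum_le_sum fun j _ => hstep j
        _ = 1 / D (a 0) - 1 / D (a N) := Finset.sum_range_sub' (fun j => 1 / D (a j)) N
        _ ≤ 1 / D (a 0) := by
            have := hDpos (a N) (ha_gt N)
            have : 0 ≤ 1 / D (a N) := by positivity
            linarith
        _ = 1 / D r := by rw [show a 0 = r by simp [hadef]]
    have hbddsum : ∀ N : ℕ, ∑ j ∈ Finset.range N, (1 / ((j:ℝ) + 1)) ≤ K * (1 / D r) := by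
      intro N
      have := hsum N
      rw [div_mul_eq_mul_div, one_mul, div_le_iff₀ hK] at this
      linarith [this]
    obtain ⟨N, hN⟩ := (tendsto_atTop.1 Real.tendsto_sum_range_one_div_nat_succ_atTop
      (K * (1 / D r) + 1)).exists
    have := hbddsum N
    linarith
  exact ⟨fun _ _ _ _ => hfalse.elim, hfalse⟩
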